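/- arXiv:cs/0501007 — 2 statements merged into one kernel-verified Lean document; each statement's English description precedes it below -/
import Mathlib

section
/- If the minimum angle in the Delaunay triangulation of P is at most α = arcsin(1/(2β)), then P contains a loose pair. -/
/-!
The side opposite an angle `θ ≤ arcsin (1/(2β))` of a Delaunay triangle with circumradius `R` has
length `2 R sin θ ≤ R / β`, so it is a chord of an empty circle of radius at least `β` times its
length. Take a shortest such chord `pq`, with midpoint `m`, on an empty circle centred at `o`, and
move the centre from `o` towards `m` until it is the centre of a leaf of `pq`. The power of a
point with respect to the circle through `p` centred at `lineMap m o t` is affine in `t`, so if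
the leaf is not empty, the moving circle meets a first point `x` of `P` while it is still empty
and of radius at least `β |pq|`, and that point satisfies `|xm| < |pm|`. Then `xp` is a shorter
chord of the same kind, contradicting minimality.
-/
open EuclideanGeometry AffineMap Module

/-- A pair `{p, q}` is a loose pair of `P` if one of the two leaves of the
flower of `pq` contains no point of `P` other than `p, q` in its interior. -/
def loosePair (P : Finset (EuclideanSpace ℝ (Fin 2))) (β : ℝ)
    (p q : EuclideanSpace ℝ (Fin 2)) : Prop :=
  ∃ u : EuclideanSpace ℝ (Fin 2), dist u p = β * dist p q ∧ dist u q = β * dist p q ∧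
    ∀ x ∈ P, x ≠ p → x ≠ q → ¬ dist x u < β * dist p q

theorem exists_mem_Ioc_forall_nonneg_and_eq_zero {ι : Type*} (s : Finset ι) (a b : ι → ℝ)
    {t₀ : ℝ} (ht₀ : t₀ ≤ 1) (hb : ∀ i ∈ s, 0 ≤ b i)
    (hneg : ∃ i ∈ s, (1 - t₀) * a i + t₀ * b i < 0) :
    ∃ τ, t₀ < τ ∧ τ ≤ 1 ∧ (∀ j ∈ s, 0 ≤ (1 - τ) * a j + τ * b j) ∧
      ∃ i ∈ s, (1 - t₀) * a i + t₀ * b i < 0 ∧ (1 - τ) * a i + τ * b i = 0 := by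
  classical
  set V := s.filter fun i => (1 - t₀) * a i + t₀ * b i < 0
  have hslope : ∀ i ∈ V, 0 < b i - a i := fun i hi => by
    rw [Finset.mem_filter] at hi
    nlinarith [hb i hi.1]
  obtain ⟨i, hiV, hmax⟩ := Finset.exists_max_image V (fun i => -a i / (b i - a i))
    (let ⟨i, hi, hneg⟩ := hneg; ⟨i, Finset.mem_filter.2 ⟨hi, hneg⟩⟩)
  obtain ⟨his, hit₀⟩ := Finset.mem_filter.1 hiV
  have hi := hslope i hiV
  have hτ₀ : t₀ < -a i / (b i - a i) := by rw [lt_div_iff₀ hi]; linarith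
  have hτ₁ : -a i / (b i - a i) ≤ 1 := by rw [div_le_one hi]; linarith [hb i his]
  refine ⟨-a i / (b i - a i), hτ₀, hτ₁, fun j hj => ?_, i, his, hit₀, by field_simp; ring⟩
  by_cases hjV : j ∈ V
  · have := (div_le_iff₀ (hslope j hjV)).1 (hmax j hjV)
    linarith
  · have hjt₀ : 0 ≤ (1 - t₀) * a j + t₀ * b j :=
      not_lt.1 fun h => hjV (Finset.mem_filter.2 ⟨hj, h⟩)
    nlinarith [hb j hj, mul_nonneg (sub_nonneg.2 hτ₁) hjt₀,
      mul_nonneg (sub_nonneg.2 hτ₀.le) (hb j hj)]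

theorem exists_lineMap_dist_eq {E : Type*} [NormedAddCommGroup E] [NormedSpace ℝ E]
    {p c₀ c₁ : E} {r : ℝ} (h₀ : dist c₀ p ≤ r) (h₁ : r ≤ dist c₁ p) :
    ∃ t ∈ Set.Icc (0 : ℝ) 1, dist (lineMap c₀ c₁ t) p = r := by
  have := intermediate_value_Icc zero_le_one
    (f := fun t : ℝ => dist (lineMap c₀ c₁ t) p) (by fun_prop)
  simpa using this (by simpa using ⟨h₀, h₁⟩)

section InnerProductSpace

variable {F : Type*} [NormedAddCommGroup F] [InnerProductSpace ℝ F]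

theorem dist_sq_sub_dist_sq_lineMap (x y c₀ c₁ : F) (t : ℝ) :
    dist x (lineMap c₀ c₁ t) ^ 2 - dist y (lineMap c₀ c₁ t) ^ 2 =
      (1 - t) * (dist x c₀ ^ 2 - dist y c₀ ^ 2) + t * (dist x c₁ ^ 2 - dist y c₁ ^ 2) := by
  simp only [dist_eq_norm, lineMap_apply_module, ← real_inner_self_eq_norm_sq, inner_sub_left,
    inner_sub_right, inner_add_left, inner_add_right, real_inner_smul_left,
    real_inner_smul_right]
  rw [real_inner_comm c₀ x, real_inner_comm c₁ x, real_inner_comm c₀ y, real_inner_comm c₁ y,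
    real_inner_comm c₀ c₁]
  ring

theorem exists_lineMap_dist_eq_and_forall_dist_le {P : Finset F} {p c₀ c₁ : F} {t₀ : ℝ}
    (ht₀ : t₀ ∈ Set.Icc (0 : ℝ) 1) (hempty : ∀ x ∈ P, dist p c₁ ≤ dist x c₁)
    (hinside : ∃ x ∈ P, dist x (lineMap c₀ c₁ t₀) < dist p (lineMap c₀ c₁ t₀)) :
    ∃ τ, t₀ < τ ∧ ∃ x ∈ P, dist x c₀ < dist p c₀ ∧
      dist x (lineMap c₀ c₁ τ) = dist p (lineMap c₀ c₁ τ) ∧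
      ∀ y ∈ P, dist p (lineMap c₀ c₁ τ) ≤ dist y (lineMap c₀ c₁ τ) := by
  have hsq {u v : ℝ} (hu : 0 ≤ u) (hv : 0 ≤ v) : u ≤ v ↔ 0 ≤ v ^ 2 - u ^ 2 := by
    rw [sub_nonneg, pow_le_pow_iff_left₀ hu hv two_ne_zero]
  obtain ⟨τ, hτ₀, -, hτP, x, hxP, hxt₀, hxτ⟩ := exists_mem_Ioc_forall_nonneg_and_eq_zero P
    (fun x => dist x c₀ ^ 2 - dist p c₀ ^ 2) (fun x => dist x c₁ ^ 2 - dist p c₁ ^ 2) ht₀.2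
    (fun x hx => (hsq dist_nonneg dist_nonneg).1 (hempty x hx))
    (by simpa only [← dist_sq_sub_dist_sq_lineMap, sub_neg,
      pow_lt_pow_iff_left₀ dist_nonneg dist_nonneg two_ne_zero] using hinside)
  refine ⟨τ, hτ₀, x, hxP, ?_, ?_, fun y hy => (hsq dist_nonneg dist_nonneg).2 ?_⟩
  · rw [← pow_lt_pow_iff_left₀ dist_nonneg dist_nonneg two_ne_zero, ← sub_neg]
    nlinarith [(hsq dist_nonneg dist_nonneg).1 (hempty x hxP), ht₀.1]
  · rw [← pow_left_inj₀ dist_nonneg dist_nonneg two_ne_zero, ← sub_eq_zero,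
      dist_sq_sub_dist_sq_lineMap, hxτ]
  · rw [dist_sq_sub_dist_sq_lineMap]
    exact hτP y hy

theorem dist_lineMap_midpoint_eq {p q o : F} (h : dist o p = dist o q) (t : ℝ) :
    dist (lineMap (midpoint ℝ p q) o t) p = dist (lineMap (midpoint ℝ p q) o t) q := by
  rw [← AffineSubspace.mem_perpBisector_iff_dist_eq] at h ⊢
  exact AffineMap.lineMap_mem t (AffineSubspace.midpoint_mem_perpBisector p q) h

theorem dist_lineMap_midpoint_sq {p q o : F} (h : dist o p = dist o q) (t : ℝ) :
    dist (lineMap (midpoint ℝ p q) o t) p ^ 2 =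
      dist (midpoint ℝ p q) p ^ 2 + t ^ 2 * dist (midpoint ℝ p q) o ^ 2 := by
  set m := midpoint ℝ p q
  have hperp : inner ℝ (o - m) (q - p) = 0 :=
    inner_vsub_vsub_of_dist_eq_of_dist_eq (dist_left_midpoint_eq_dist_right_midpoint p q)
      ((dist_comm p o).trans (h.trans (dist_comm o q)))
  rw [dist_comm _ p, dist_comm m p, dist_comm m o, dist_eq_norm, dist_eq_norm, dist_eq_norm,
    lineMap_apply_module', show p - (t • (o - m) + m) = (p - m) - t • (o - m) by abel,
    norm_sub_sq_real, real_inner_smul_right, norm_smul t, mul_pow, Real.norm_eq_abs, sq_abs,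
    norm_sub_rev o m, left_sub_midpoint, real_inner_smul_left, ← neg_sub q p, inner_neg_left,
    real_inner_comm, hperp]
  ring

def IsShortEmptyChord {X : Type*} [MetricSpace X] (P : Finset X) (β : ℝ) (p q : X) : Prop :=
  ∃ o R, dist o p = R ∧ dist o q = R ∧ β * dist p q ≤ R ∧ ∀ x ∈ P, R ≤ dist x o

theorem IsShortEmptyChord.empty_leaf_or_shorter {P : Finset F} {β : ℝ} {p q : F}
    (hβ : 1 / 2 ≤ β) (h : IsShortEmptyChord P β p q) :
    (∃ u, dist u p = β * dist p q ∧ dist u q = β * dist p q ∧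
      ∀ x ∈ P, x ≠ p → x ≠ q → ¬ dist x u < β * dist p q) ∨
    ∃ x ∈ P, x ≠ p ∧ dist x p < dist p q ∧ IsShortEmptyChord P β x p := by
  obtain ⟨o, R, hop, hoq, hβR, hempty⟩ := h
  have hbis : dist o p = dist o q := hop.trans hoq.symm
  set m := midpoint ℝ p q
  have hmp : dist m p = dist p q / 2 := by
    rw [dist_midpoint_left, Real.norm_two]; ring
  obtain ⟨t₀, ht₀, hleaf⟩ := exists_lineMap_dist_eq (c₀ := m) (r := β * dist p q)
    (by rw [hmp]; nlinarith [dist_nonneg (x := p) (y := q)]) (hop ▸ hβR)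
  by_cases hinside : ∃ x ∈ P, dist x (lineMap m o t₀) < dist p (lineMap m o t₀)
  · right
    obtain ⟨τ, hτ, x, hxP, hxm, hxτ, hτP⟩ := exists_lineMap_dist_eq_and_forall_dist_le ht₀
      (fun x hx => by rw [dist_comm, hop]; exact hempty x hx) hinside
    have hxp : dist x p < dist p q := calc
      dist x p ≤ dist x m + dist m p := dist_triangle _ _ _
      _ < dist m p + dist m p := by rw [dist_comm p m] at hxm; linarith
      _ = dist p q := by rw [hmp]; ring
    have hgrow : dist (lineMap m o t₀) p ≤ dist (lineMap m o τ) p := by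
      rw [← pow_le_pow_iff_left₀ dist_nonneg dist_nonneg two_ne_zero,
        dist_lineMap_midpoint_sq hbis, dist_lineMap_midpoint_sq hbis]
      gcongr
      exact ht₀.1
    refine ⟨x, hxP, fun hx => hxm.ne (congrArg (dist · m) hx), hxp,
      lineMap m o τ, _, by rw [dist_comm, hxτ, dist_comm], rfl, ?_, fun y hy => ?_⟩
    · calc β * dist x p ≤ β * dist p q := by gcongr
        _ ≤ _ := hleaf.symm.le.trans hgrow
    · rw [dist_comm _ p]; exact hτP y hy
  · left
    push Not at hinside
    refine ⟨lineMap m o t₀, hleaf, dist_lineMap_midpoint_eq hbis t₀ ▸ hleaf, fun x hx _ _ => ?_⟩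
    rw [not_lt, ← hleaf, dist_comm]
    exact hinside x hx

theorem exists_empty_leaf_of_exists_isShortEmptyChord {P : Finset F} {β : ℝ} (hβ : 1 / 2 ≤ β)
    (h : ∃ p ∈ P, ∃ q ∈ P, p ≠ q ∧ IsShortEmptyChord P β p q) :
    ∃ p ∈ P, ∃ q ∈ P, p ≠ q ∧ ∃ u, dist u p = β * dist p q ∧ dist u q = β * dist p q ∧
      ∀ x ∈ P, x ≠ p → x ≠ q → ¬ dist x u < β * dist p q := by
  classical
  obtain ⟨⟨p, q⟩, hpq, hmin⟩ := Finset.exists_min_image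
    (P.offDiag.filter fun z => IsShortEmptyChord P β z.1 z.2) (fun z => dist z.1 z.2)
    (let ⟨p, hp, q, hq, hne, h⟩ := h; ⟨(p, q), by simp [hp, hq, hne, h]⟩)
  simp only [Finset.mem_filter, Finset.mem_offDiag] at hpq hmin
  obtain ⟨⟨hp, hq, hne⟩, hshort⟩ := hpq
  refine ⟨p, hp, q, hq, hne, (hshort.empty_leaf_or_shorter hβ).resolve_right ?_⟩
  rintro ⟨x, hx, hxp, hlt, hxshort⟩
  exact (hmin (x, p) ⟨⟨hx, hp, hxp⟩, hxshort⟩).not_gt hlt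

end InnerProductSpace

section Planar

variable {V Pt : Type*} [NormedAddCommGroup V] [InnerProductSpace ℝ V] [MetricSpace Pt]
  [NormedAddTorsor V Pt] [Fact (finrank ℝ V = 2)]

theorem EuclideanGeometry.Sphere.dist_eq_two_mul_radius_mul_sin_angle {s : Sphere Pt}
    {a b c : Pt} (ha : a ∈ s) (hb : b ∈ s) (hc : c ∈ s) (hab : a ≠ b) (hac : a ≠ c)
    (hbc : b ≠ c) : dist b c = 2 * s.radius * Real.sin (∠ b a c) := by
  have : FiniteDimensional ℝ V := .of_fact_finrank_eq_two
  let _ : Module.Oriented ℝ V (Fin 2) := ⟨(finBasisOfFinrankEq ℝ V Fact.out).orientation⟩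
  have hsin : |Real.Angle.sin (∡ b a c)| = Real.sin (∠ b a c) := by
    rcases oangle_eq_angle_or_eq_neg_angle hab.symm hac.symm with h | h <;>
      simp [h, Real.Angle.sin_coe, abs_of_nonneg
        (Real.sin_nonneg_of_nonneg_of_le_pi (angle_nonneg b a c) (angle_le_pi b a c))]
  have h := Sphere.dist_div_sin_oangle_eq_two_mul_radius hb ha hc hab.symm hbc hac
  rw [hsin] at h
  rcases eq_or_ne (Real.sin (∠ b a c)) 0 with h0 | h0
  · rw [h0, div_zero] at h
    linarith [dist_triangle b s.center c, mem_sphere.1 hb, mem_sphere'.1 hc, dist_pos.2 hbc]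
  · rw [div_eq_iff h0] at h
    exact h

theorem EuclideanGeometry.Sphere.mul_dist_le_radius_of_angle_le_arcsin {β : ℝ} (hβ : 0 < β)
    {s : Sphere Pt} {a b c : Pt} (ha : a ∈ s) (hb : b ∈ s) (hc : c ∈ s) (hab : a ≠ b)
    (hac : a ≠ c) (hbc : b ≠ c) (h : ∠ b a c ≤ Real.arcsin (1 / (2 * β))) :
    β * dist b c ≤ s.radius := by
  have hsin : Real.sin (∠ b a c) ≤ 1 / (2 * β) := by
    refine (Real.le_arcsin_iff_sin_le' ⟨?_, h.trans (Real.arcsin_le_pi_div_two _)⟩).1 h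
    linarith [angle_nonneg b a c, Real.pi_pos]
  have hR : 0 ≤ s.radius := (mem_sphere.1 ha) ▸ dist_nonneg
  calc β * dist b c = 2 * β * s.radius * Real.sin (∠ b a c) := by
        rw [s.dist_eq_two_mul_radius_mul_sin_angle ha hb hc hab hac hbc]; ring
    _ ≤ 2 * β * s.radius * (1 / (2 * β)) := by gcongr
    _ = s.radius := by field_simp

theorem isShortEmptyChord_of_angle_le_arcsin {P : Finset Pt} {β : ℝ} (hβ : 0 < β) {a b c o : Pt}
    {R : ℝ} (hoa : dist o a = R) (hob : dist o b = R) (hoc : dist o c = R)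
    (hempty : ∀ x ∈ P, R ≤ dist x o) (hab : a ≠ b) (hac : a ≠ c) (hbc : b ≠ c)
    (h : ∠ b a c ≤ Real.arcsin (1 / (2 * β))) : IsShortEmptyChord P β b c :=
  ⟨o, R, hob, hoc, Sphere.mul_dist_le_radius_of_angle_le_arcsin (s := ⟨o, R⟩) hβ
    (mem_sphere'.2 hoa) (mem_sphere'.2 hob) (mem_sphere'.2 hoc) hab hac hbc h, hempty⟩

end Planar

theorem bad_delaunay_triangle_gives_loose_pair_general
    (P : Finset (EuclideanSpace ℝ (Fin 2))) (β : ℝ) (hβ : Real.sqrt 2 ≤ β)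
    (a b c : EuclideanSpace ℝ (Fin 2)) (ha : a ∈ P) (hb : b ∈ P) (hc : c ∈ P)
    (hab : a ≠ b) (hac : a ≠ c) (hbc : b ≠ c)
    (hDel : ∃ (o : EuclideanSpace ℝ (Fin 2)) (R : ℝ),
      dist o a = R ∧ dist o b = R ∧ dist o c = R ∧ ∀ x ∈ P, ¬ dist x o < R)
    (hang : ∠ b a c ≤ Real.arcsin (1 / (2 * β)) ∨ ∠ a b c ≤ Real.arcsin (1 / (2 * β)) ∨
      ∠ a c b ≤ Real.arcsin (1 / (2 * β))) :
    ∃ p ∈ P, ∃ q ∈ P, p ≠ q ∧ loosePair P β p q := by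
  have : Fact (finrank ℝ (EuclideanSpace ℝ (Fin 2)) = 2) := ⟨finrank_euclideanSpace_fin⟩
  have hβ₂ : 1 / 2 ≤ β := by linarith [Real.one_lt_sqrt_two]
  obtain ⟨o, R, hoa, hob, hoc, hemp⟩ := hDel
  have hempty : ∀ x ∈ P, R ≤ dist x o := fun x hx => not_lt.1 (hemp x hx)
  have hshort : ∃ p ∈ P, ∃ q ∈ P, p ≠ q ∧ IsShortEmptyChord P β p q := by
    have hβ₀ : 0 < β := by linarith
    rcases hang with h | h | h
    · exact ⟨b, hb, c, hc, hbc, isShortEmptyChord_of_angle_le_arcsin hβ₀ hoa hob hoc hempty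
        hab hac hbc h⟩
    · exact ⟨a, ha, c, hc, hac, isShortEmptyChord_of_angle_le_arcsin hβ₀ hob hoa hoc hempty
        hab.symm hbc hac h⟩
    · exact ⟨a, ha, b, hb, hab, isShortEmptyChord_of_angle_le_arcsin hβ₀ hoc hoa hob hempty
        hac.symm hbc.symm hab h⟩
  exact exists_empty_leaf_of_exists_isShortEmptyChord hβ₂ hshort

/-- If the Delaunay triangulation of `P` has a triangle with an angle at most
`α = arcsin (1/(2β))`, then `P` contains a loose pair. -/
theorem bad_delaunay_triangle_gives_loose_pair
    (P : Finset (EuclideanSpace ℝ (Fin 2))) (β : ℝ) (hβ : Real.sqrt 2 ≤ β)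
    (a b c : EuclideanSpace ℝ (Fin 2)) (ha : a ∈ P) (hb : b ∈ P) (hc : c ∈ P)
    (hab : a ≠ b) (hac : a ≠ c) (hbc : b ≠ c)
    (hcol : ¬ Collinear ℝ ({a, b, c} : Set (EuclideanSpace ℝ (Fin 2))))
    (hDel : ∃ (o : EuclideanSpace ℝ (Fin 2)) (R : ℝ),
      dist o a = R ∧ dist o b = R ∧ dist o c = R ∧ ∀ x ∈ P, ¬ dist x o < R)
    (hang : ∠ b a c ≤ Real.arcsin (1 / (2 * β)) ∨ ∠ a b c ≤ Real.arcsin (1 / (2 * β)) ∨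
      ∠ a c b ≤ Real.arcsin (1 / (2 * β))) :
    ∃ p ∈ P, ∃ q ∈ P, p ≠ q ∧ loosePair P β p q :=
  bad_delaunay_triangle_gives_loose_pair_general P β hβ a b c ha hb hc hab hac hbc hDel hang
end

section
/- Let P be a point set in which every loose pair has length at least ℓ/c₁ for a constant c₁ ≥ 2, let {p,q} be a loose pair of length ℓ whose crescent is non-empty, and let w be its moonstruck vertex. Then lfs(w) ≥ ℓ/(c₁·c_gbu), where c_gbu = (2β)^{π/α}. -/
/-- The local feature size of `w` w.r.t. `P`: the distance from `w` to its
nearest other point of `P`. -/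
noncomputable def lfsP (P : Finset (EuclideanSpace ℝ (Fin 2)))
    (w : EuclideanSpace ℝ (Fin 2)) : ℝ :=
  sInf {d : ℝ | ∃ x ∈ P, x ≠ w ∧ d = dist w x}

open Module RealInnerProductSpace

lemma coll (d x y : EuclideanSpace ℝ (Fin 2)) (hd : d ≠ 0) (hy : y ≠ 0)
    (hx : ⟪x, d⟫ = 0) (hy' : ⟪y, d⟫ = 0) : ∃ t : ℝ, x = t • y := by
  set K : Submodule ℝ (EuclideanSpace ℝ (Fin 2)) := (ℝ ∙ d)ᗮ with hK
  have hxK : x ∈ K := Submodule.mem_orthogonal_singleton_iff_inner_left.mpr hx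
  have hyK : y ∈ K := Submodule.mem_orthogonal_singleton_iff_inner_left.mpr hy'
  have hKr : finrank ℝ K = 1 := by
    have h1 : finrank ℝ (ℝ ∙ d) = 1 := finrank_span_singleton hd
    have h2 := Submodule.finrank_add_finrank_orthogonal (K := (ℝ ∙ d))
    have h3 : finrank ℝ (EuclideanSpace ℝ (Fin 2)) = 2 := by
      simp [finrank_euclideanSpace]
    rw [hK]; omega
  have hle : (ℝ ∙ y) ≤ K := by
    rw [Submodule.span_singleton_le_iff_mem]; exact hyK
  have heq : (ℝ ∙ y) = K := Submodule.eq_of_le_of_finrank_le hle (by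
    rw [hKr, finrank_span_singleton hy])
  have : x ∈ (ℝ ∙ y) := heq ▸ hxK
  rcases Submodule.mem_span_singleton.mp this with ⟨t, ht⟩
  exact ⟨t, ht.symm⟩

lemma key_R (β ℓ : ℝ) (hβ2 : 2 ≤ β ^ 2) (hβ0 : 0 < β) (hℓ : 0 < ℓ)
    (p q v c o w : EuclideanSpace ℝ (Fin 2)) (hℓpq : ℓ = dist p q)
    (hvp : dist v p = β * ℓ) (hvq : dist v q = β * ℓ)
    (hcv : dist c v = β * ℓ) (hcpq : dist c p = dist c q)
    (hcfar : dist c (midpoint ℝ p q) = dist v (midpoint ℝ p q) + β * ℓ)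
    (hwc : dist w c ≤ dist c p) (hwv : β * ℓ < dist w v)
    (R : ℝ) (hop : dist o p = R) (hoq : dist o q = R) (how : dist o w = R) :
    β * ℓ ≤ R := by
  obtain ⟨m, hm⟩ : ∃ m, m = midpoint ℝ p q := ⟨_, rfl⟩
  rw [← hm] at hcfar
  obtain ⟨e, he⟩ : ∃ e, e = p - m := ⟨_, rfl⟩
  have hqm : q - m = -e := by
    rw [he, hm, left_sub_midpoint, right_sub_midpoint, ← smul_neg, neg_sub]
  have hene : ‖e‖ = ℓ / 2 := by
    have h := dist_left_midpoint (𝕜 := ℝ) p q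
    rw [he, ← dist_eq_norm, hm, h, ← hℓpq]
    norm_num
    ring
  have expand : ∀ z : EuclideanSpace ℝ (Fin 2),
      dist z p ^ 2 = ‖z - m‖ ^ 2 - 2 * ⟪z - m, e⟫ + ‖e‖ ^ 2 ∧
      dist z q ^ 2 = ‖z - m‖ ^ 2 + 2 * ⟪z - m, e⟫ + ‖e‖ ^ 2 := by
    intro z
    constructor
    · have h1 : z - p = (z - m) - e := by rw [he]; module
      rw [dist_eq_norm, h1, norm_sub_sq_real]
    · have h1 : z - q = (z - m) - (q - m) := by module
      rw [dist_eq_norm, h1, hqm, sub_neg_eq_add, norm_add_sq_real]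
  have bisect : ∀ z : EuclideanSpace ℝ (Fin 2), dist z p = dist z q →
      ⟪z - m, e⟫ = 0 ∧ dist z p ^ 2 = ‖z - m‖ ^ 2 + ‖e‖ ^ 2 := by
    intro z hz
    obtain ⟨h1, h2⟩ := expand z
    have hz2 : dist z p ^ 2 = dist z q ^ 2 := by rw [hz]
    have h0 : ⟪z - m, e⟫ = 0 := by linarith only [h1, h2, hz2]
    exact ⟨h0, by rw [h1, h0]; ring⟩
  obtain ⟨hv0, hv1⟩ := bisect v (by rw [hvp, hvq])
  obtain ⟨hc0, hc1⟩ := bisect c hcpq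
  obtain ⟨ho0, ho1⟩ := bisect o (by rw [hop, hoq])
  have hl2 : ‖e‖ ^ 2 = ℓ ^ 2 / 4 := by rw [hene]; ring
  have hβℓ : (0:ℝ) < β * ℓ := mul_pos hβ0 hℓ
  have hvm2 : ‖v - m‖ ^ 2 = β ^ 2 * ℓ ^ 2 - ℓ ^ 2 / 4 := by
    rw [hvp] at hv1
    have : (β * ℓ) ^ 2 = β ^ 2 * ℓ ^ 2 := by ring
    linarith only [hv1, hl2, this]
  have hℓ2 : (0:ℝ) < ℓ ^ 2 := by positivity
  have hboard : 2 * ℓ ^ 2 ≤ β ^ 2 * ℓ ^ 2 := mul_le_mul_of_nonneg_right hβ2 hℓ2.le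
  have hsqpos : (0:ℝ) < ‖v - m‖ ^ 2 := by linarith only [hvm2, hℓ2, hboard]
  have hvmpos : 0 < ‖v - m‖ := by
    rcases (norm_nonneg (v - m)).eq_or_lt with h | h
    · rw [← h] at hsqpos; norm_num at hsqpos
    · exact h
  have hvne : v - m ≠ 0 := by
    intro h; rw [h, norm_zero] at hvmpos; exact lt_irrefl 0 hvmpos
  have hene0 : e ≠ 0 := by
    intro h; rw [h, norm_zero] at hene; linarith only [hene, hℓ]
  obtain ⟨k, hk⟩ := coll e (c - m) (v - m) hene0 hvne hc0 hv0
  obtain ⟨t, ht⟩ := coll e (o - m) (v - m) hene0 hvne ho0 hv0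
  have hcmd : |k| * ‖v - m‖ = ‖v - m‖ + β * ℓ := by
    rw [← Real.norm_eq_abs, ← norm_smul, ← hk, ← dist_eq_norm, ← dist_eq_norm]
    exact hcfar
  have hcvd : |k - 1| * ‖v - m‖ = β * ℓ := by
    have h1 : c - v = (k - 1) • (v - m) := by
      rw [sub_smul, one_smul, ← hk]; module
    rw [← hcv, dist_eq_norm, h1, norm_smul, Real.norm_eq_abs]
  have hk1 : 1 < k := by
    by_contra hcon
    push_neg at hcon
    have habs : |k - 1| = 1 - k := by
      rw [abs_of_nonpos (by linarith only [hcon])]; ring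
    rw [habs] at hcvd
    rcases abs_cases k with ⟨a1, _⟩ | ⟨a1, _⟩ <;> rw [a1] at hcmd
    · linarith only [hcmd, hcvd, hβℓ]
    · linarith only [hcmd, hcvd, hvmpos, hβℓ]
  obtain ⟨A, hA⟩ : ∃ A, A = ⟪w - m, v - m⟫ := ⟨_, rfl⟩
  have E1 : dist w v ^ 2 = ‖w - m‖ ^ 2 - 2 * A + ‖v - m‖ ^ 2 := by
    have h1 : w - v = (w - m) - (v - m) := by module
    rw [dist_eq_norm, h1, norm_sub_sq_real, hA]
  have E2 : dist w c ^ 2 = ‖w - m‖ ^ 2 - 2 * (k * A) + k ^ 2 * ‖v - m‖ ^ 2 := by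
    have h1 : w - c = (w - m) - (c - m) := by module
    rw [dist_eq_norm, h1, hk, norm_sub_sq_real, real_inner_smul_right, norm_smul,
      Real.norm_eq_abs, mul_pow, sq_abs, hA]
  have E3 : dist w o ^ 2 = ‖w - m‖ ^ 2 - 2 * (t * A) + t ^ 2 * ‖v - m‖ ^ 2 := by
    have h1 : w - o = (w - m) - (o - m) := by module
    rw [dist_eq_norm, h1, ht, norm_sub_sq_real, real_inner_smul_right, norm_smul,
      Real.norm_eq_abs, mul_pow, sq_abs, hA]
  have C1 : ℓ ^ 2 / 4 < ‖w - m‖ ^ 2 - 2 * A := by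
    have h1 : (β * ℓ) ^ 2 < dist w v ^ 2 := pow_lt_pow_left₀ hwv hβℓ.le two_ne_zero
    have h2 : (β * ℓ) ^ 2 = β ^ 2 * ℓ ^ 2 := by ring
    linarith only [h1, h2, E1, hvm2]
  have C2 : ‖w - m‖ ^ 2 - 2 * (k * A) ≤ ℓ ^ 2 / 4 := by
    have h1 : dist w c ^ 2 ≤ dist c p ^ 2 := pow_le_pow_left₀ dist_nonneg hwc 2
    have h2 : ‖c - m‖ ^ 2 = k ^ 2 * ‖v - m‖ ^ 2 := by
      rw [hk, norm_smul, Real.norm_eq_abs, mul_pow, sq_abs]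
    linarith only [h1, h2, E2, hc1, hl2]
  have hom2 : ‖o - m‖ ^ 2 = t ^ 2 * ‖v - m‖ ^ 2 := by
    rw [ht, norm_smul, Real.norm_eq_abs, mul_pow, sq_abs]
  have hR2 : R ^ 2 = t ^ 2 * ‖v - m‖ ^ 2 + ℓ ^ 2 / 4 := by
    rw [hop] at ho1
    linarith only [ho1, hom2, hl2]
  have C3 : ‖w - m‖ ^ 2 - 2 * (t * A) = ℓ ^ 2 / 4 := by
    have h1 : dist w o ^ 2 = R ^ 2 := by rw [dist_comm, how]
    linarith only [h1, E3, hR2]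
  have e1 : 0 < (t - 1) * A := by nlinarith only [C1, C3]
  have e2 : 0 ≤ (k - t) * A := by nlinarith only [C2, C3]
  have ht1 : 1 < t := by
    rcases mul_pos_iff.mp e1 with ⟨h1, h2⟩ | ⟨h1, h2⟩
    · linarith only [h1]
    · -- A < 0 : then k ≤ t from e2, but t < 1 < k
      exfalso
      have hkt : k - t ≤ 0 := by
        by_contra hgt
        push_neg at hgt
        nlinarith only [e2, mul_pos hgt (show (0:ℝ) < -A by linarith only [h2])]
      linarith only [h1, hkt, hk1]
  have hR0 : 0 ≤ R := by rw [← hop]; exact dist_nonneg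
  have ht2 : 1 < t ^ 2 := by nlinarith only [ht1]
  have hfinal : (β * ℓ) ^ 2 < R ^ 2 := by
    have h1 : 1 * ‖v - m‖ ^ 2 < t ^ 2 * ‖v - m‖ ^ 2 :=
      mul_lt_mul_of_pos_right ht2 hsqpos
    have h2 : (β * ℓ) ^ 2 = β ^ 2 * ℓ ^ 2 := by ring
    linarith only [h1, hR2, hvm2, h2]
  exact le_of_lt (lt_of_pow_lt_pow_left₀ 2 hR0 hfinal)

lemma lfsP_nonneg (P : Finset (EuclideanSpace ℝ (Fin 2))) (w : EuclideanSpace ℝ (Fin 2)) :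
    0 ≤ lfsP P w := by
  apply Real.sInf_nonneg
  rintro d ⟨x, hx, hne, rfl⟩
  exact dist_nonneg

/-- Moonstruck lemma: if every loose pair of `P` has length at least `ℓ/c₁`
(`c₁ ≥ 2`), `{p, q}` is a loose pair of length `ℓ` with non-empty crescent and
moonstruck vertex `w`, then (assuming the gap lemma) `lfs(w) ≥ ℓ/(c₁ c_gbu)`,
where `c_gbu = (2β)^(π/α)`, `c_g = (2β)^(π/α + 1)`, `α = arcsin (1/(2β))`. -/
theorem moonstruck_lemma (P : Finset (EuclideanSpace ℝ (Fin 2))) (β : ℝ)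
    (hβ : Real.sqrt 2 ≤ β) (c₁ : ℝ) (hc₁ : 2 ≤ c₁)
    (p q : EuclideanSpace ℝ (Fin 2)) (hp : p ∈ P) (hq : q ∈ P) (hpq : p ≠ q)
    (ℓ : ℝ) (hℓ : ℓ = dist p q)
    -- every loose pair of `P` has length at least `ℓ/c₁`:
    (hall : ∀ p' ∈ P, ∀ q' ∈ P, p' ≠ q' → loosePair P β p' q' → ℓ / c₁ ≤ dist p' q')
    -- `{p, q}` is loose, with empty leaf of center `v`:
    (v : EuclideanSpace ℝ (Fin 2))
    (hvp : dist v p = β * ℓ) (hvq : dist v q = β * ℓ)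
    (hleaf : ∀ x ∈ P, x ≠ p → x ≠ q → ¬ dist x v < β * ℓ)
    -- `c` is the point of the leaf boundary furthest from the line `pq`:
    (c : EuclideanSpace ℝ (Fin 2)) (hcv : dist c v = β * ℓ)
    (hcpq : dist c p = dist c q)
    (hcfar : dist c (midpoint ℝ p q) = dist v (midpoint ℝ p q) + β * ℓ)
    -- `w` is a moonstruck vertex: a point of `P` in the crescent whose
    -- circumdisk with `p, q` is empty of `P`:
    (w : EuclideanSpace ℝ (Fin 2)) (hwP : w ∈ P)
    (hwc : dist w c ≤ dist c p) (hwv : β * ℓ < dist w v)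
    (o : EuclideanSpace ℝ (Fin 2)) (R : ℝ)
    (hop : dist o p = R) (hoq : dist o q = R) (how : dist o w = R)
    (hoempty : ∀ x ∈ P, ¬ dist x o < R)
    -- the gap lemma:
    (hgaplemma : ∀ v' ∈ P, ∀ (o' : EuclideanSpace ℝ (Fin 2)) (R' : ℝ),
      dist o' v' = R' → (∀ x ∈ P, ¬ dist x o' < R') →
      (2 * β) ^ (Real.pi / Real.arcsin (1 / (2 * β)) + 1) * lfsP P v' < R' →
      ∃ p' ∈ P, ∃ q' ∈ P, p' ≠ q' ∧ loosePair P β p' q' ∧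
        dist p' q' ≤ (2 * β) ^ (Real.pi / Real.arcsin (1 / (2 * β))) * lfsP P v') :
    ℓ / (c₁ * (2 * β) ^ (Real.pi / Real.arcsin (1 / (2 * β)))) ≤ lfsP P w := by
  have hs2 : (0:ℝ) < Real.sqrt 2 := Real.sqrt_pos.mpr (by norm_num)
  have hβ0 : 0 < β := lt_of_lt_of_le hs2 hβ
  have h2β : (0:ℝ) < 2 * β := by linarith only [hβ0]
  have hβ2 : 2 ≤ β ^ 2 := by
    nlinarith only [Real.sq_sqrt (show (0:ℝ) ≤ 2 by norm_num), hβ, Real.sqrt_nonneg 2]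
  have hℓ0 : 0 < ℓ := hℓ ▸ dist_pos.mpr hpq
  have hkey : β * ℓ ≤ R :=
    key_R β ℓ hβ2 hβ0 hℓ0 p q v c o w hℓ hvp hvq hcv hcpq hcfar hwc hwv R hop hoq how
  set x := Real.pi / Real.arcsin (1 / (2 * β)) with hx
  have hG : (0:ℝ) < (2 * β) ^ x := Real.rpow_pos_of_pos h2β x
  have hc0 : (0:ℝ) < c₁ := by linarith only [hc₁]
  have hlfs0 : 0 ≤ lfsP P w := lfsP_nonneg P w
  rw [div_le_iff₀ (mul_pos hc0 hG)]
  by_cases hcase : (2 * β) ^ (x + 1) * lfsP P w < R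
  · obtain ⟨p', hp', q', hq', hne, hloose, hlen⟩ := hgaplemma w hwP o R how hoempty hcase
    have h1 : ℓ / c₁ ≤ (2 * β) ^ x * lfsP P w := le_trans (hall p' hp' q' hq' hne hloose) hlen
    rw [div_le_iff₀ hc0] at h1
    linarith only [h1]
  · push_neg at hcase
    have hre : (2 * β) ^ (x + 1) = (2 * β) ^ x * (2 * β) := Real.rpow_add_one (ne_of_gt h2β) x
    have h3 : β * ℓ ≤ β * (2 * ((2 * β) ^ x * lfsP P w)) := by
      calc β * ℓ ≤ (2 * β) ^ (x + 1) * lfsP P w := le_trans hkey hcase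
        _ = β * (2 * ((2 * β) ^ x * lfsP P w)) := by rw [hre]; ring
    have h4 : ℓ ≤ 2 * ((2 * β) ^ x * lfsP P w) := le_of_mul_le_mul_left h3 hβ0
    have h5 : 0 ≤ (c₁ - 2) * ((2 * β) ^ x * lfsP P w) :=
      mul_nonneg (by linarith only [hc₁]) (mul_nonneg hG.le hlfs0)
    nlinarith only [h4, h5]
end
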